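/- Let (G, σ) be a signed bipartite planar graph of negative girth at least 6 (i.e., every cycle with an odd number of negative edges has length at least 6). Then (G, σ) admits a switching homomorphism to (K_{3,3}, M); equivalently, χ_c(G, σ) ≤ 3. (One may assume as given: (a) Grötzsch's theorem, that loopless triangle-free planar multigraphs are 3-colorable, and (b) the packing theorem that such (G,σ) admits six switching-equivalent signatures with pairwise disjoint negative edge sets.) -/

import Mathlib

/-- A signed graph: two symmetric edge relations (positive and negative edges).
Parallel edges of different signs (digons) and negative loops are representable;
positive loops are disallowed (graphs in the paper have no loops unless specified,
loops occurring in circular cliques are always negative). -/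
structure SGraph (V : Type) where
  pos : V → V → Prop
  neg : V → V → Prop
  pos_symm : ∀ u v, pos u v → pos v u
  neg_symm : ∀ u v, neg u v → neg v u
  pos_irrefl : ∀ v, ¬ pos v v

namespace SGraph

variable {V W : Type}

/-- An edge-sign preserving homomorphism: preserves adjacency and edge signs. -/
def IsSpHom (G : SGraph V) (H : SGraph W) (f : V → W) : Prop :=
  (∀ u v, G.pos u v → H.pos (f u) (f v)) ∧ (∀ u v, G.neg u v → H.neg (f u) (f v))

/-- The signed graph obtained from `G` by switching at the set of vertices where `s` is `true`:
the sign of an edge is flipped exactly when its endpoints get different values of `s`. -/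
def switch (G : SGraph V) (s : V → Bool) : SGraph V where
  pos u v := (s u = s v ∧ G.pos u v) ∨ (s u ≠ s v ∧ G.neg u v)
  neg u v := (s u = s v ∧ G.neg u v) ∨ (s u ≠ s v ∧ G.pos u v)
  pos_symm := by
    rintro u v (⟨h, hp⟩ | ⟨h, hn⟩)
    · exact Or.inl ⟨h.symm, G.pos_symm u v hp⟩
    · exact Or.inr ⟨fun e => h e.symm, G.neg_symm u v hn⟩
  neg_symm := by
    rintro u v (⟨h, hn⟩ | ⟨h, hp⟩)
    · exact Or.inl ⟨h.symm, G.neg_symm u v hn⟩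
    · exact Or.inr ⟨fun e => h e.symm, G.pos_symm u v hp⟩
  pos_irrefl := by
    rintro v (⟨_, hp⟩ | ⟨h, _⟩)
    · exact G.pos_irrefl v hp
    · exact h rfl

/-- A switching homomorphism: an edge-sign preserving homomorphism after switching
at a suitable set of vertices of the source (equivalently, a vertex map preserving
adjacency and the signs of closed walks). -/
def SwHom (G : SGraph V) (H : SGraph W) : Prop :=
  ∃ (s : V → Bool) (f : V → W), (G.switch s).IsSpHom H f

/-- The underlying graph of the signed graph is bipartite. -/
def Bipartite (G : SGraph V) : Prop :=
  ∃ c : V → Bool, ∀ u v, G.pos u v ∨ G.neg u v → c u ≠ c v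

end SGraph

/-- `x` reduced modulo `r` into `[0, r)` (for `r > 0`). -/
noncomputable def rmod (x r : ℝ) : ℝ := x - r * ⌊x / r⌋

/-- The circular distance between the points `x` and `y` of the circle of
circumference `r` (the length of the shorter arc joining them). -/
noncomputable def cdist (r x y : ℝ) : ℝ := min (rmod (x - y) r) (rmod (y - x) r)

namespace SGraph

variable {V : Type}

/-- A circular `r`-coloring of a signed graph: vertices get points of a circle of
circumference `r` such that the endpoints of each positive edge are at circular
distance at least `1`, and each endpoint of a negative edge is at circular distance
at least `1` from the antipode of the other endpoint (equivalently, the endpoints of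
a negative edge are at circular distance at most `r/2 - 1`). -/
def IsCircColoring (G : SGraph V) (r : ℝ) (φ : V → ℝ) : Prop :=
  (∀ u v, G.pos u v → 1 ≤ cdist r (φ u) (φ v)) ∧
  (∀ u v, G.neg u v → 1 ≤ cdist r (φ u) (φ v + r / 2))

/-- The circular chromatic number of a signed graph. -/
noncomputable def circChrom (G : SGraph V) : ℝ :=
  sInf {r : ℝ | 1 ≤ r ∧ ∃ φ : V → ℝ, G.IsCircColoring r φ}

end SGraph

/-- The signed graph `(K_{k,k}, M)`: the complete bipartite graph `K_{k,k}` whose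
negative edges form a perfect matching (the edges `inl i — inr i`). -/
def KkkM (k : ℕ) : SGraph (Fin k ⊕ Fin k) where
  pos x y := ∃ i j : Fin k, i ≠ j ∧
    ((x = Sum.inl i ∧ y = Sum.inr j) ∨ (y = Sum.inl i ∧ x = Sum.inr j))
  neg x y := ∃ i : Fin k, (x = Sum.inl i ∧ y = Sum.inr i) ∨ (y = Sum.inl i ∧ x = Sum.inr i)
  pos_symm := by
    rintro x y ⟨i, j, hij, (⟨h1, h2⟩ | ⟨h1, h2⟩)⟩
    · exact ⟨i, j, hij, Or.inr ⟨h1, h2⟩⟩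
    · exact ⟨i, j, hij, Or.inl ⟨h1, h2⟩⟩
  neg_symm := by
    rintro x y ⟨i, (⟨h1, h2⟩ | ⟨h1, h2⟩)⟩
    · exact ⟨i, Or.inr ⟨h1, h2⟩⟩
    · exact ⟨i, Or.inl ⟨h1, h2⟩⟩
  pos_irrefl := by
    rintro v ⟨i, j, _, (⟨h1, h2⟩ | ⟨h1, h2⟩)⟩ <;> (subst h1; simp at h2)

/-- `σ` and `τ` are switching equivalent signatures on the graph `G`:
`τ` is obtained from `σ` by switching at the set of vertices where `sw` is `true`
(the sign of an edge flips exactly when its endpoints get different values of `sw`). -/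
def SwEquiv {V : Type} (G : SimpleGraph V) (σ τ : Sym2 V → Bool) : Prop :=
  ∃ sw : V → Bool, ∀ u v : V, G.Adj u v →
    τ s(u, v) = Bool.xor (σ s(u, v)) (Bool.xor (sw u) (sw v))

/-- The signed graph determined by a graph `G` and a signature `σ` on its edges
(`true` = positive). -/
def toSGraph {V : Type} (G : SimpleGraph V) (σ : Sym2 V → Bool) : SGraph V where
  pos u v := G.Adj u v ∧ σ s(u, v) = true
  neg u v := G.Adj u v ∧ σ s(u, v) = false
  pos_symm := by
    rintro u v ⟨h, hs⟩
    exact ⟨h.symm, by rwa [Sym2.eq_swap]⟩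
  neg_symm := by
    rintro u v ⟨h, hs⟩
    exact ⟨h.symm, by rwa [Sym2.eq_swap]⟩
  pos_irrefl := fun v h => G.loopless.irrefl v h.1

/-- The image (simple) graph of `H` under a vertex map `f`: the contraction/quotient
graph, with loops removed and parallel edges merged. -/
def mapGraph {W W' : Type} (H : SimpleGraph W) (f : W → W') : SimpleGraph W' where
  Adj x y := x ≠ y ∧ ∃ u v, H.Adj u v ∧ f u = x ∧ f v = y
  symm := ⟨by
    rintro x y ⟨hne, u, v, h, hu, hv⟩
    exact ⟨hne.symm, v, u, h.symm, hv, hu⟩⟩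
  loopless := ⟨fun x h => h.1 rfl⟩

/-! Fix one signature `τ₀` of the packing and contract the components of its negative subgraph.
For every other signature `τᵢ` of the packing, the switching from `τ₀` to `τᵢ` flips along each
`τ₀`-negative edge (the negative edge sets are disjoint), exactly as the bipartition does, so their
sum is constant on components; and a `τ₀`-positive edge is `τᵢ`-negative exactly when this sum
agrees at its ends. Hence a `τ₀`-positive edge inside a component would be negative in every `τᵢ`,
and every triangle of the contraction contains a `τᵢ`-negative edge for each of the five `i`, so
two of them share an edge. The contraction is therefore loopless and triangle-free, Grötzsch
3-colours it, and the colour of a vertex together with its side of the bipartition is a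
homomorphism of `(G, τ₀)` to `(K₃,₃, M)`. Placing both copies of `i` at the point `i` is a circular
3-colouring of `(K₃,₃, M)`, which pulls back to `(G, σ)` through the switching homomorphism. -/

open SimpleGraph

theorem rmod_add_int_mul {r : ℝ} (hr : r ≠ 0) (x : ℝ) (n : ℤ) : rmod (x + n * r) r = rmod x r := by
  rw [rmod, rmod, add_div, mul_div_cancel_right₀ _ hr, Int.floor_add_intCast]
  push_cast
  ring

theorem rmod_eq_sub_int_mul {r x : ℝ} (hr : 0 < r) (n : ℤ) (h₀ : 0 ≤ x - n * r)
    (h₁ : x - n * r < r) : rmod x r = x - n * r := by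
  have : ⌊x / r⌋ = n := by
    rw [Int.floor_eq_iff, le_div_iff₀ hr, div_lt_iff₀ hr]
    constructor <;> linarith
  rw [rmod, this]
  ring

theorem cdist_eq_of_sub_eq {r x y x' y' : ℝ} (hr : r ≠ 0) (n : ℤ)
    (h : x - y = x' - y' + n * r) : cdist r x y = cdist r x' y' := by
  have h' : y - x = y' - x' + ((-n : ℤ) : ℝ) * r := by push_cast; linarith
  rw [cdist, cdist, h, h', rmod_add_int_mul hr, rmod_add_int_mul hr]

theorem le_cdist {r x y a : ℝ} (ha : 0 < a) (n : ℤ) (h₁ : a ≤ x - y - n * r)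
    (h₂ : x - y - n * r ≤ r - a) : a ≤ cdist r x y := by
  have hr : 0 < r := by linarith
  rw [cdist, rmod_eq_sub_int_mul hr n (by linarith) (by linarith),
    rmod_eq_sub_int_mul hr (-n - 1) (by push_cast; linarith) (by push_cast; linarith)]
  push_cast
  exact le_min (by linarith) (by linarith)

theorem one_le_cdist_natCast {k i j : ℕ} (hi : i < k) (hj : j < k) (hij : i ≠ j) :
    1 ≤ cdist k i j := by
  have hi' : (i : ℝ) + 1 ≤ k := by exact_mod_cast hi
  have hj' : (j : ℝ) + 1 ≤ k := by exact_mod_cast hj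
  rcases hij.lt_or_gt with h | h
  · have h' : (i : ℝ) + 1 ≤ j := by exact_mod_cast h
    apply le_cdist one_pos (-1) <;> push_cast <;> linarith
  · have h' : (j : ℝ) + 1 ≤ i := by exact_mod_cast h
    apply le_cdist one_pos 0 <;> push_cast <;> linarith

namespace SGraph

variable {V W : Type}

theorem IsCircColoring.circChrom_le {G : SGraph V} {r : ℝ} {φ : V → ℝ}
    (hφ : G.IsCircColoring r φ) (hr : 1 ≤ r) : G.circChrom ≤ r :=
  csInf_le ⟨1, fun _ h => h.1⟩ ⟨hr, φ, hφ⟩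

theorem IsCircColoring.comp {G : SGraph V} {H : SGraph W} {f : V → W} {r : ℝ} {ψ : W → ℝ}
    (hψ : H.IsCircColoring r ψ) (hf : G.IsSpHom H f) : G.IsCircColoring r (ψ ∘ f) :=
  ⟨fun u v h => hψ.1 _ _ (hf.1 u v h), fun u v h => hψ.2 _ _ (hf.2 u v h)⟩

theorem IsCircColoring.of_switch {G : SGraph V} {s : V → Bool} {r : ℝ} {φ : V → ℝ} (hr : r ≠ 0)
    (hφ : (G.switch s).IsCircColoring r φ) :
    G.IsCircColoring r fun v => φ v + if s v then r / 2 else 0 := by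
  constructor
  · intro u v h
    by_cases hs : s u = s v
    · rw [cdist_eq_of_sub_eq hr 0 (x' := φ u) (y' := φ v)
        (by beta_reduce; rw [hs]; push_cast; ring)]
      exact hφ.1 u v (Or.inl ⟨hs, h⟩)
    · have := hφ.2 u v (Or.inr ⟨hs, h⟩)
      cases hu : s u <;> cases hv : s v <;> simp only [hu, hv, not_true] at hs ⊢
      · rwa [cdist_eq_of_sub_eq hr 0 (x' := φ u) (y' := φ v + r / 2) (by push_cast; ring)]
      · rwa [cdist_eq_of_sub_eq hr 1 (x' := φ u) (y' := φ v + r / 2) (by push_cast; ring)]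
  · intro u v h
    by_cases hs : s u = s v
    · rw [cdist_eq_of_sub_eq hr 0 (x' := φ u) (y' := φ v + r / 2)
        (by beta_reduce; rw [hs]; push_cast; ring)]
      exact hφ.2 u v (Or.inl ⟨hs, h⟩)
    · have := hφ.1 u v (Or.inr ⟨hs, h⟩)
      cases hu : s u <;> cases hv : s v <;> simp only [hu, hv, not_true] at hs ⊢
      · rwa [cdist_eq_of_sub_eq hr (-1) (x' := φ u) (y' := φ v) (by push_cast; ring)]
      · rwa [cdist_eq_of_sub_eq hr 0 (x' := φ u) (y' := φ v) (by push_cast; ring)]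

theorem SwHom.circChrom_le {G : SGraph V} {H : SGraph W} {r : ℝ} {ψ : W → ℝ} (h : G.SwHom H)
    (hr : 1 ≤ r) (hψ : H.IsCircColoring r ψ) : G.circChrom ≤ r := by
  obtain ⟨s, f, hf⟩ := h
  exact ((hψ.comp hf).of_switch (by positivity)).circChrom_le hr

end SGraph

/-- The ends of a negative edge sit at the same point, at distance `k / 2` from its antipode. -/
theorem KkkM_isCircColoring {k : ℕ} (hk : 2 ≤ k) :
    (KkkM k).IsCircColoring k (Sum.elim (fun i => (i : ℕ)) (fun i => (i : ℕ))) := by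
  have hk' : (2 : ℝ) ≤ k := by exact_mod_cast hk
  constructor
  · rintro x y ⟨i, j, hij, ⟨rfl, rfl⟩ | ⟨rfl, rfl⟩⟩
    · exact one_le_cdist_natCast i.isLt j.isLt (Fin.val_ne_of_ne hij)
    · exact one_le_cdist_natCast j.isLt i.isLt (Fin.val_ne_of_ne hij.symm)
  · rintro x y ⟨i, ⟨rfl, rfl⟩ | ⟨rfl, rfl⟩⟩ <;> simp only [Sum.elim_inl, Sum.elim_inr] <;>
      exact le_cdist one_pos (-1) (by push_cast; linarith) (by push_cast; linarith)

section Signature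

variable {V : Type} {G : SimpleGraph V}

theorem SwEquiv.symm {σ τ : Sym2 V → Bool} (h : SwEquiv G σ τ) : SwEquiv G τ σ := by
  obtain ⟨sw, hsw⟩ := h
  refine ⟨sw, fun u v huv => ?_⟩
  rw [hsw u v huv, Bool.xor_assoc, Bool.xor_self, Bool.xor_false]

theorem SwEquiv.trans {σ τ υ : Sym2 V → Bool} (h₁ : SwEquiv G σ τ) (h₂ : SwEquiv G τ υ) :
    SwEquiv G σ υ := by
  obtain ⟨sw₁, hsw₁⟩ := h₁
  obtain ⟨sw₂, hsw₂⟩ := h₂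
  refine ⟨fun v => xor (sw₁ v) (sw₂ v), fun u v huv => ?_⟩
  rw [hsw₂ u v huv, hsw₁ u v huv]
  beta_reduce
  cases σ s(u, v) <;> cases sw₁ u <;> cases sw₁ v <;> cases sw₂ u <;> cases sw₂ v <;> rfl

theorem toSGraph_switch {σ τ : Sym2 V → Bool} {sw : V → Bool}
    (hsw : ∀ u v, G.Adj u v → τ s(u, v) = xor (σ s(u, v)) (xor (sw u) (sw v))) :
    (toSGraph G σ).switch sw = toSGraph G τ := by
  have key : ∀ u v, G.Adj u v → ∀ b, (τ s(u, v) = b ↔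
      (sw u = sw v ∧ σ s(u, v) = b) ∨ (sw u ≠ sw v ∧ σ s(u, v) = !b)) := by
    intro u v huv b
    rw [hsw u v huv]
    cases σ s(u, v) <;> cases sw u <;> cases sw v <;> cases b <;> decide
  simp only [SGraph.switch, toSGraph, SGraph.mk.injEq]
  constructor <;> ext u v <;> by_cases huv : G.Adj u v
  all_goals first
    | simp only [huv, key u v huv, true_and, Bool.not_true, Bool.not_false] | simp [huv]

theorem SwEquiv.swHom_of_isSpHom {W : Type} {σ τ : Sym2 V → Bool} {H : SGraph W} {f : V → W}
    (h : SwEquiv G σ τ) (hf : (toSGraph G τ).IsSpHom H f) : (toSGraph G σ).SwHom H := by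
  obtain ⟨sw, hsw⟩ := h
  exact ⟨sw, f, toSGraph_switch hsw ▸ hf⟩

theorem isSpHom_KkkM {c : V → Bool} (hc : ∀ u v, G.Adj u v → c u ≠ c v)
    {τ : Sym2 V → Bool} {k : ℕ} (κ : V → Fin k)
    (hpos : ∀ u v, G.Adj u v → τ s(u, v) = true → κ u ≠ κ v)
    (hneg : ∀ u v, G.Adj u v → τ s(u, v) = false → κ u = κ v) :
    (toSGraph G τ).IsSpHom (KkkM k) fun v => bif c v then .inl (κ v) else .inr (κ v) := by
  constructor
  · rintro u v ⟨huv, hτ⟩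
    have hκ := hpos u v huv hτ
    have hcuv := hc u v huv
    cases hu : c u <;> cases hv : c v <;> simp only [hu, hv, ne_eq, not_true] at hcuv ⊢
    · exact ⟨κ v, κ u, hκ.symm, Or.inr ⟨rfl, rfl⟩⟩
    · exact ⟨κ u, κ v, hκ, Or.inl ⟨rfl, rfl⟩⟩
  · rintro u v ⟨huv, hτ⟩
    have hκ := hneg u v huv hτ
    have hcuv := hc u v huv
    cases hu : c u <;> cases hv : c v <;> simp only [hu, hv, ne_eq, not_true] at hcuv ⊢
    · exact ⟨κ v, Or.inr ⟨rfl, hκ ▸ rfl⟩⟩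
    · exact ⟨κ u, Or.inl ⟨rfl, hκ ▸ rfl⟩⟩

end Signature

theorem SimpleGraph.Reachable.eq_of_forall_adj {V β : Type*} {H : SimpleGraph V} {f : V → β}
    {u v : V} (hf : ∀ a b, H.Adj a b → f a = f b) (h : H.Reachable u v) : f u = f v := by
  rw [reachable_iff_reflTransGen] at h
  induction h with
  | refl => rfl
  | tail _ hbc ih => exact ih.trans (hf _ _ hbc)

section Packing

variable {V : Type} {G : SimpleGraph V} {c : V → Bool} {τ₀ : Sym2 V → Bool}

def negGraph (G : SimpleGraph V) (τ : Sym2 V → Bool) : SimpleGraph V where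
  Adj a b := G.Adj a b ∧ τ s(a, b) = false
  symm := ⟨fun _ _ h => ⟨h.1.symm, Sym2.eq_swap ▸ h.2⟩⟩
  loopless := ⟨fun a h => G.loopless.irrefl a h.1⟩

theorem negGraph_le (G : SimpleGraph V) (τ : Sym2 V → Bool) : negGraph G τ ≤ G :=
  fun _ _ h => h.1

def NegDisjoint (G : SimpleGraph V) (τ τ' : Sym2 V → Bool) : Prop :=
  ∀ e ∈ G.edgeSet, ¬(τ e = false ∧ τ' e = false)

theorem eq_true_of_connectedComponentMk_ne {u v : V} (huv : G.Adj u v)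
    (h : (negGraph G τ₀).connectedComponentMk u ≠ (negGraph G τ₀).connectedComponentMk v) :
    τ₀ s(u, v) = true := by
  by_contra hf
  exact h (ConnectedComponent.eq.mpr (Adj.reachable ⟨huv, Bool.eq_false_iff.mpr hf⟩))

variable {τ : Sym2 V → Bool} {s : V → Bool}

/-- Along a `τ₀`-negative edge `τ` is positive, so the switching `s` from `τ₀` to `τ` flips
there, just like the bipartition `c`. -/
theorem xor_eq_of_reachable_negGraph (hc : ∀ u v, G.Adj u v → c u ≠ c v)
    (hs : ∀ u v, G.Adj u v → τ s(u, v) = xor (τ₀ s(u, v)) (xor (s u) (s v)))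
    (hd : NegDisjoint G τ₀ τ) {u v : V} (h : (negGraph G τ₀).Reachable u v) :
    xor (s u) (c u) = xor (s v) (c v) := by
  refine h.eq_of_forall_adj (f := fun v => xor (s v) (c v)) ?_
  rintro a b ⟨hab, hneg⟩
  have hpos : τ s(a, b) = true := by
    by_contra hf
    exact hd _ hab ⟨hneg, Bool.eq_false_iff.mpr hf⟩
  have hca := hc a b hab
  rw [hs a b hab, hneg] at hpos
  revert hpos hca
  cases s a <;> cases s b <;> cases c a <;> cases c b <;> decide

theorem eq_false_iff_xor_eq (hc : ∀ u v, G.Adj u v → c u ≠ c v)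
    (hs : ∀ u v, G.Adj u v → τ s(u, v) = xor (τ₀ s(u, v)) (xor (s u) (s v)))
    {u v : V} (huv : G.Adj u v) (hpos : τ₀ s(u, v) = true) :
    τ s(u, v) = false ↔ xor (s u) (c u) = xor (s v) (c v) := by
  have hcuv := hc u v huv
  rw [hs u v huv, hpos]
  revert hcuv
  cases s u <;> cases s v <;> cases c u <;> cases c v <;> decide

theorem eq_false_of_reachable_negGraph (hc : ∀ u v, G.Adj u v → c u ≠ c v)
    (hsw : SwEquiv G τ₀ τ) (hd : NegDisjoint G τ₀ τ) {u v : V} (huv : G.Adj u v)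
    (hpos : τ₀ s(u, v) = true) (h : (negGraph G τ₀).Reachable u v) : τ s(u, v) = false := by
  obtain ⟨s, hs⟩ := hsw
  exact (eq_false_iff_xor_eq hc hs huv hpos).mpr (xor_eq_of_reachable_negGraph hc hs hd h)

theorem not_reachable_negGraph_of_pos (hc : ∀ u v, G.Adj u v → c u ≠ c v)
    {τ₁ τ₂ : Sym2 V → Bool} (hsw₁ : SwEquiv G τ₀ τ₁) (hsw₂ : SwEquiv G τ₀ τ₂)
    (hd₁ : NegDisjoint G τ₀ τ₁) (hd₂ : NegDisjoint G τ₀ τ₂) (hd : NegDisjoint G τ₁ τ₂)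
    {u v : V} (huv : G.Adj u v) (hpos : τ₀ s(u, v) = true) :
    ¬(negGraph G τ₀).Reachable u v := fun h =>
  hd _ huv ⟨eq_false_of_reachable_negGraph hc hsw₁ hd₁ huv hpos h,
    eq_false_of_reachable_negGraph hc hsw₂ hd₂ huv hpos h⟩

/-- Of three Boolean values two agree, so a triangle of `τ₀`-positive edges between
`τ₀`-negative components always contains a `τ`-negative edge. -/
theorem exists_eq_false_of_triangle (hc : ∀ u v, G.Adj u v → c u ≠ c v)
    (hsw : SwEquiv G τ₀ τ) (hd : NegDisjoint G τ₀ τ) {u₁ v₁ u₂ v₂ u₃ v₃ : V}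
    (h₁ : G.Adj u₁ v₁) (h₂ : G.Adj u₂ v₂) (h₃ : G.Adj u₃ v₃)
    (p₁ : τ₀ s(u₁, v₁) = true) (p₂ : τ₀ s(u₂, v₂) = true) (p₃ : τ₀ s(u₃, v₃) = true)
    (r₁ : (negGraph G τ₀).Reachable v₁ u₂) (r₂ : (negGraph G τ₀).Reachable v₂ u₃)
    (r₃ : (negGraph G τ₀).Reachable v₃ u₁) :
    τ s(u₁, v₁) = false ∨ τ s(u₂, v₂) = false ∨ τ s(u₃, v₃) = false := by
  obtain ⟨s, hs⟩ := hsw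
  rw [eq_false_iff_xor_eq hc hs h₁ p₁, eq_false_iff_xor_eq hc hs h₂ p₂,
    eq_false_iff_xor_eq hc hs h₃ p₃, xor_eq_of_reachable_negGraph hc hs hd r₁,
    xor_eq_of_reachable_negGraph hc hs hd r₂, xor_eq_of_reachable_negGraph hc hs hd r₃]
  cases xor (s u₁) (c u₁) <;> cases xor (s u₂) (c u₂) <;> cases xor (s u₃) (c u₃) <;> decide

theorem cliqueFree_three_mapGraph_negGraph {ι : Type} [Fintype ι] (hι : 3 < Fintype.card ι)
    (hc : ∀ u v, G.Adj u v → c u ≠ c v) {τ : ι → Sym2 V → Bool}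
    (hsw : ∀ i, SwEquiv G τ₀ (τ i)) (hd₀ : ∀ i, NegDisjoint G τ₀ (τ i))
    (hd : Pairwise fun i j => NegDisjoint G (τ i) (τ j)) :
    (mapGraph G (negGraph G τ₀).connectedComponentMk).CliqueFree 3 := by
  classical
  intro t ht
  obtain ⟨x, y, z, hxy, hxz, hyz, rfl⟩ := Finset.card_eq_three.mp ht.card_eq
  obtain ⟨-, u₁, v₁, h₁, rfl, rfl⟩ := ht.isClique (by simp) (by simp) hxy
  obtain ⟨-, u₂, v₂, h₂, hu₂, rfl⟩ := ht.isClique (by simp) (by simp) hyz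
  obtain ⟨-, u₃, v₃, h₃, hu₃, hv₃⟩ := ht.isClique (by simp) (by simp) hxz.symm
  let e : Fin 3 → Sym2 V := ![s(u₁, v₁), s(u₂, v₂), s(u₃, v₃)]
  have key : ∀ i, ∃ k, τ i (e k) = false := by
    intro i
    rcases exists_eq_false_of_triangle hc (hsw i) (hd₀ i) h₁ h₂ h₃
      (eq_true_of_connectedComponentMk_ne h₁ hxy)
      (eq_true_of_connectedComponentMk_ne h₂ (hu₂ ▸ hyz))
      (eq_true_of_connectedComponentMk_ne h₃ (hu₃ ▸ hv₃ ▸ hxz.symm))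
      (ConnectedComponent.eq.mp hu₂.symm)
      (ConnectedComponent.eq.mp hu₃.symm)
      (ConnectedComponent.eq.mp hv₃) with h | h | h
    exacts [⟨0, h⟩, ⟨1, h⟩, ⟨2, h⟩]
  choose g hg using key
  obtain ⟨i, j, hij, hgij⟩ := Fintype.exists_ne_map_eq_of_card_lt g (by simpa using hι)
  have he : ∀ k, e k ∈ G.edgeSet := by
    intro k
    fin_cases k
    exacts [h₁, h₂, h₃]
  exact hd hij _ (he (g i)) ⟨hg i, hgij ▸ hg j⟩

end Packing

theorem bipartite_planar_girth6_to_K33M_general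
    (Planar : ∀ (W : Type), SimpleGraph W → Prop)
    (grotzsch : ∀ (W : Type) (H : SimpleGraph W), Planar W H → H.CliqueFree 3 →
      H.Colorable 3)
    (contract_planar : ∀ (A B : Type) (H H₁ : SimpleGraph A) (f : A → B), H₁ ≤ H →
      (∀ u v : A, f u = f v ↔ H₁.Reachable u v) → Planar A H → Planar B (mapGraph H f))
    {V : Type} (G : SimpleGraph V) (σ : Sym2 V → Bool)
    (hplanar : Planar V G)
    (hbip : ∃ c : V → Bool, ∀ u v, G.Adj u v → c u ≠ c v)
    (hpack : ∃ τ : Fin 6 → Sym2 V → Bool, (∀ i, SwEquiv G σ (τ i)) ∧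
      ∀ i j, i ≠ j → ∀ e ∈ G.edgeSet, ¬(τ i e = false ∧ τ j e = false)) :
    (toSGraph G σ).SwHom (KkkM 3) ∧ (toSGraph G σ).circChrom ≤ 3 := by
  obtain ⟨c, hc⟩ := hbip
  obtain ⟨τ, hτ, hdisj⟩ := hpack
  have hsw (i : Fin 5) : SwEquiv G (τ 0) (τ i.succ) := (hτ 0).symm.trans (hτ i.succ)
  have hd₀ (i : Fin 5) : NegDisjoint G (τ 0) (τ i.succ) := hdisj _ _ (Fin.succ_ne_zero i).symm
  have hd : Pairwise fun i j : Fin 5 => NegDisjoint G (τ i.succ) (τ j.succ) :=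
    fun i j hij => hdisj _ _ ((Fin.succ_injective 5).ne hij)
  set H := negGraph G (τ 0)
  have hplanar' : Planar H.ConnectedComponent (mapGraph G H.connectedComponentMk) :=
    contract_planar _ _ G H _ (negGraph_le G _) (fun _ _ => ConnectedComponent.eq) hplanar
  obtain ⟨C⟩ := grotzsch _ _ hplanar'
    (cliqueFree_three_mapGraph_negGraph (by simp) hc hsw hd₀ hd)
  have hom : (toSGraph G σ).SwHom (KkkM 3) := by
    refine (hτ 0).swHom_of_isSpHom (isSpHom_KkkM hc (C ∘ H.connectedComponentMk) ?_ ?_)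
    · intro u v huv hpos
      refine C.valid ⟨fun h => ?_, u, v, huv, rfl, rfl⟩
      exact not_reachable_negGraph_of_pos hc (hsw 0) (hsw 1) (hd₀ 0) (hd₀ 1)
        (hd (by decide)) huv hpos (ConnectedComponent.eq.mp h)
    · exact fun u v huv hneg =>
        congrArg C (ConnectedComponent.eq.mpr (Adj.reachable ⟨huv, hneg⟩))
  have hK : (KkkM 3).IsCircColoring 3 (Sum.elim (fun i => (i : ℕ)) (fun i => (i : ℕ))) := by
    exact_mod_cast KkkM_isCircColoring (k := 3) (by norm_num)
  exact ⟨hom, hom.circChrom_le (by norm_num) hK⟩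

/-- every signed bipartite planar graph of negative girth at least 6
admits a switching homomorphism to `(K_{3,3}, M)`; equivalently `χ_c(G,σ) ≤ 3`.
Planarity is taken as an abstract predicate, together with (a) Grötzsch's theorem for
loopless triangle-free planar (multi)graphs and the fact that planarity is preserved
by contracting a subgraph, and (b) the packing theorem providing six switching
equivalent signatures with pairwise disjoint negative edge sets. -/
theorem bipartite_planar_girth6_to_K33M
    (Planar : ∀ (W : Type), SimpleGraph W → Prop)
    (grotzsch : ∀ (W : Type) (H : SimpleGraph W), Planar W H → H.CliqueFree 3 →
      H.Colorable 3)
    (contract_planar : ∀ (A B : Type) (H H₁ : SimpleGraph A) (f : A → B), H₁ ≤ H →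
      (∀ u v : A, f u = f v ↔ H₁.Reachable u v) → Planar A H → Planar B (mapGraph H f))
    {V : Type} [Fintype V] (G : SimpleGraph V) (σ : Sym2 V → Bool)
    (hplanar : Planar V G)
    (hbip : ∃ c : V → Bool, ∀ u v, G.Adj u v → c u ≠ c v)
    (hgirth : ∀ (u : V) (w : G.Walk u u), w.IsCycle →
      Odd (w.edges.countP fun e => !σ e) → 6 ≤ w.length)
    (hpack : ∃ τ : Fin 6 → Sym2 V → Bool, (∀ i, SwEquiv G σ (τ i)) ∧
      ∀ i j, i ≠ j → ∀ e ∈ G.edgeSet, ¬(τ i e = false ∧ τ j e = false)) :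
    (toSGraph G σ).SwHom (KkkM 3) ∧ (toSGraph G σ).circChrom ≤ 3 :=
  bipartite_planar_girth6_to_K33M_general Planar grotzsch contract_planar G σ hplanar hbip hpack
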